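/- If T is a tree (with at least 2 vertices), then its eccentricity matrix ε(T) is irreducible; equivalently, the graph on the vertex set of T in which u and w are adjacent exactly when ε(T)_{uw} ≠ 0 is connected. -/

import Mathlib

open Matrix

/-- The eccentricity of a vertex: the largest distance from it to any vertex. -/
noncomputable def SimpleGraph.ecc {V : Type*} [Fintype V] (G : SimpleGraph V) (v : V) : ℕ :=
  Finset.univ.sup (G.dist v)

/-- The eccentricity matrix of a graph: `ε(G)_{uw} = d(u,w)` if
`d(u,w) = min{e(u), e(w)}`, and `0` otherwise. -/
noncomputable def SimpleGraph.eccMatrix {V : Type*} [Fintype V] (G : SimpleGraph V) :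
    Matrix V V ℝ :=
  Matrix.of fun u w =>
    if G.dist u w = min (G.ecc u) (G.ecc w) then (G.dist u w : ℝ) else 0

/-!
In a tree the four-point condition `d(a,b) + d(u,w) ≤ max (d(a,u) + d(b,w)) (d(a,w) + d(b,u))`
holds: project `u` and `w` onto the path from `a` to `b` and compare the order of the two
projections along it. For a diametral pair `(a, b)` it gives `e(v) = max (d(v,a)) (d(v,b))`
for every vertex `v`. Whenever `d(u,w) = e(u)` we also have `e(u) ≤ e(w)`, so `ε(T)_{uw} ≠ 0`;
hence every vertex is joined to `a` or to `b`, and `a` is joined to `b`.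
-/

namespace SimpleGraph

variable {V : Type*} {G : SimpleGraph V}

theorem Walk.IsPath.append {u v w : V} {p : G.Walk u v} {q : G.Walk v w} (hp : p.IsPath)
    (hq : q.IsPath) (h : ∀ x ∈ p.support, x ∈ q.support → x = v) : (p.append q).IsPath := by
  have hq' := hq.support_nodup
  rw [← q.cons_tail_support, List.nodup_cons] at hq'
  rw [Walk.isPath_def, Walk.support_append]
  refine hp.support_nodup.append hq'.2 fun x hxp hxq => ?_
  obtain rfl := h x hxp (List.mem_of_mem_tail hxq)
  exact hq'.1 hxq

namespace IsTree

theorem length_eq_dist (hT : G.IsTree) {x y : V} {p : G.Walk x y} (hp : p.IsPath) :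
    p.length = G.dist x y := by
  obtain ⟨q, hq, hlen⟩ := hT.connected.exists_path_of_dist x y
  rw [(hT.existsUnique_path x y).unique hp hq, hlen]

theorem dist_add_dist_eq_of_mem_support (hT : G.IsTree) {x y m : V} {p : G.Walk x y}
    (hp : p.IsPath) (hm : m ∈ p.support) : G.dist x m + G.dist m y = G.dist x y := by
  classical
  rw [← hT.length_eq_dist (hp.takeUntil hm), ← hT.length_eq_dist (hp.dropUntil hm),
    ← hT.length_eq_dist hp, ← Walk.length_append, p.take_spec hm]

theorem exists_mem_support_dist_add_dist_eq (hT : G.IsTree) {a b : V} {p : G.Walk a b}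
    (hp : p.IsPath) (u : V) : ∃ m ∈ p.support,
      G.dist u m + G.dist m a = G.dist u a ∧ G.dist u m + G.dist m b = G.dist u b := by
  classical
  obtain ⟨r, hr, -⟩ := hT.connected.exists_path_of_dist u a
  obtain ⟨m, hmp, hmr, hfirst⟩ :=
    r.exists_mem_support_forall_mem_support_imp_eq p.support.toFinset ⟨a, by simp⟩
  rw [List.mem_toFinset] at hmp
  refine ⟨m, hmp, hT.dist_add_dist_eq_of_mem_support hr hmr, ?_⟩
  have hpath : ((r.takeUntil m hmr).append (p.dropUntil m hmp)).IsPath :=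
    (hr.takeUntil hmr).append (hp.dropUntil hmp) fun x hx hx' =>
      hfirst x (List.mem_toFinset.mpr (p.support_dropUntil_subset_support hmp hx')) hx
  rw [← hT.length_eq_dist hpath, Walk.length_append, hT.length_eq_dist (hr.takeUntil hmr),
    hT.length_eq_dist (hp.dropUntil hmp)]

theorem dist_add_dist_add_dist_eq_or (hT : G.IsTree) {a b m m' : V} {p : G.Walk a b}
    (hp : p.IsPath) (hm : m ∈ p.support) (hm' : m' ∈ p.support) :
    G.dist a m + G.dist m m' + G.dist m' b = G.dist a b ∨
      G.dist a m' + G.dist m' m + G.dist m b = G.dist a b := by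
  classical
  have hsplit := hT.dist_add_dist_eq_of_mem_support hp hm
  have hm'' : m' ∈ (p.takeUntil m hm).support ∨ m' ∈ (p.dropUntil m hm).support := by
    rwa [← Walk.mem_support_append_iff, p.take_spec hm]
  rcases hm'' with h | h
  · have := hT.dist_add_dist_eq_of_mem_support (hp.takeUntil hm) h
    omega
  · have := hT.dist_add_dist_eq_of_mem_support (hp.dropUntil hm) h
    omega

theorem dist_add_dist_le_max (hT : G.IsTree) (a b u w : V) :
    G.dist a b + G.dist u w ≤ max (G.dist a u + G.dist b w) (G.dist a w + G.dist b u) := by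
  obtain ⟨p, hp, -⟩ := hT.connected.exists_path_of_dist a b
  obtain ⟨m, hm, hma, hmb⟩ := hT.exists_mem_support_dist_add_dist_eq hp u
  obtain ⟨m', hm', hm'a, hm'b⟩ := hT.exists_mem_support_dist_add_dist_eq hp w
  have hsplit := hT.dist_add_dist_eq_of_mem_support hp hm
  have hsplit' := hT.dist_add_dist_eq_of_mem_support hp hm'
  have htri : G.dist u w ≤ G.dist u m + G.dist m m' + G.dist m' w :=
    hT.connected.dist_triangle.trans (add_le_add_left hT.connected.dist_triangle _)
  have horder := hT.dist_add_dist_add_dist_eq_or hp hm hm'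
  simp only [G.dist_comm] at *
  omega

theorem dist_le_max_of_forall_dist_le (hT : G.IsTree) {a b : V}
    (hab : ∀ x y, G.dist x y ≤ G.dist a b) (v w : V) :
    G.dist v w ≤ max (G.dist v a) (G.dist v b) := by
  have := hT.dist_add_dist_le_max a b v w
  have := hab a w
  have := hab b w
  simp only [G.dist_comm] at *
  omega

end IsTree

theorem dist_le_ecc [Fintype V] (G : SimpleGraph V) (v w : V) : G.dist v w ≤ G.ecc v :=
  Finset.le_sup (Finset.mem_univ w)

theorem IsTree.ecc_eq_max_of_forall_dist_le [Fintype V] (hT : G.IsTree) {a b : V}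
    (hab : ∀ x y, G.dist x y ≤ G.dist a b) (v : V) :
    G.ecc v = max (G.dist v a) (G.dist v b) :=
  le_antisymm (Finset.sup_le fun w _ => hT.dist_le_max_of_forall_dist_le hab v w)
    (max_le (G.dist_le_ecc v a) (G.dist_le_ecc v b))

def eccGraph [Fintype V] (G : SimpleGraph V) : SimpleGraph V :=
  fromRel fun u w => G.eccMatrix u w ≠ 0

theorem Connected.eccGraph_reachable_of_dist_eq_ecc [Fintype V] (hG : G.Connected) {u w : V}
    (h : G.dist u w = G.ecc u) : G.eccGraph.Reachable u w := by
  rcases eq_or_ne u w with rfl | hne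
  · rfl
  refine Adj.reachable ((fromRel_adj _ u w).mpr ⟨hne, Or.inl ?_⟩)
  have hmin : G.dist u w = min (G.ecc u) (G.ecc w) := by
    rw [min_eq_left (h ▸ G.dist_comm ▸ G.dist_le_ecc w u), h]
  simp only [eccMatrix, of_apply, if_pos hmin, ne_eq, Nat.cast_eq_zero]
  exact (hG.pos_dist_of_ne hne).ne'

end SimpleGraph

theorem eccMatrix_irreducible_of_tree_general {V : Type*} [Fintype V]
    (G : SimpleGraph V) (hT : G.IsTree) :
    (SimpleGraph.fromRel fun u w => G.eccMatrix u w ≠ 0).Connected := by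
  have := hT.connected.nonempty
  obtain ⟨⟨a, b⟩, hab⟩ := Finite.exists_max fun x : V × V => G.dist x.1 x.2
  have hecc := hT.ecc_eq_max_of_forall_dist_le fun x y => hab (x, y)
  have reach : ∀ {u w}, G.dist u w = G.ecc u → G.eccGraph.Reachable u w :=
    hT.connected.eccGraph_reachable_of_dist_eq_ecc
  have hba : G.eccGraph.Reachable b a :=
    reach (by rw [hecc b, SimpleGraph.dist_self, max_eq_left (Nat.zero_le _)])
  have hreach : ∀ v, G.eccGraph.Reachable v a := fun v => by
    rcases max_choice (G.dist v a) (G.dist v b) with h | h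
    · exact reach (by rw [hecc, h])
    · exact (reach (by rw [hecc, h])).trans hba
  exact SimpleGraph.Connected.mk fun u v => (hreach u).trans (hreach v).symm

/-- The eccentricity matrix of a tree (on at least two vertices) is irreducible:
the graph whose edges are the nonzero entries of `ε(T)` is connected. -/
theorem eccMatrix_irreducible_of_tree {V : Type*} [Fintype V] [DecidableEq V]
    (G : SimpleGraph V) (hT : G.IsTree) (hn : 2 ≤ Fintype.card V) :
    (SimpleGraph.fromRel fun u w => G.eccMatrix u w ≠ 0).Connected :=
  eccMatrix_irreducible_of_tree_general G hT
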